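/- Let V = [-π, π], C = {0, 1}, and T(v, c) = v(2c − 1). Suppose Dec and N_v are defined so that N_v(f(v,c)) = T(v,c) and the autoencoder constraint holds on the range of the injective map f. Then the data disentangling property fails: Dec(N_v(f(v,0)), c-feature of type 1) = f(−v, 1) ≠ f(v, 1) for all v ≠ 0, i.e., transferring the varying factor v from a type-0 car to a type-1 car yields the mirrored viewpoint −v instead of v. -/

import Mathlib

/-!
Feeding the encoding `w * s c` of a point of `V` back through the autoencoder constraint and
using `s c * s c = 1` pins the decoder down: `Dec (w, c) = f (w * s c, c)`. With the mirrored
sign `s c = 2c − 1`, the code `N_v (f (v, 0)) = -v` of a type-0 car is therefore decoded under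
type 1 as `f (-v, 1)`, which differs from `f (v, 1)` by injectivity of `f` once `v ≠ 0`.
-/

open Real

section Autoencoder

variable {X C : Type*} {f : ℝ × C → X} {N_v : X → ℝ} {N_c : X → C} {Dec : ℝ × C → X}
  {s : C → ℝ} {V : Set ℝ}

theorem decode_eq_of_autoencoder (hs : ∀ c, s c * s c = 1)
    (hNv : ∀ v c, N_v (f (v, c)) = v * s c) (hNc : ∀ v c, N_c (f (v, c)) = c)
    (hae : ∀ v c, v ∈ V → Dec (N_v (f (v, c)), N_c (f (v, c))) = f (v, c))
    {w : ℝ} {c : C} (hw : w * s c ∈ V) : Dec (w, c) = f (w * s c, c) := by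
  have h := hae (w * s c) c hw
  rwa [hNv, hNc, mul_assoc, hs, mul_one] at h

end Autoencoder

theorem Fin.two_mul_cast_sub_one_mul_self (c : Fin 2) :
    (2 * (c : ℝ) - 1) * (2 * (c : ℝ) - 1) = 1 := by
  fin_cases c <;> norm_num

theorem stmt_11 {X : Type*}
    (f : ℝ × Fin 2 → X) (hf : Function.Injective f)
    (N_v : X → ℝ) (N_c : X → Fin 2) (Dec : ℝ × Fin 2 → X)
    (hNv : ∀ (v : ℝ) (c : Fin 2), N_v (f (v, c)) = v * (2 * (c : ℝ) - 1))
    (hNc : ∀ (v : ℝ) (c : Fin 2), N_c (f (v, c)) = c)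
    (hae : ∀ (v : ℝ) (c : Fin 2), v ∈ Set.Icc (-π) π →
      Dec (N_v (f (v, c)), N_c (f (v, c))) = f (v, c)) :
    ∀ v : ℝ, v ∈ Set.Icc (-π) π → v ≠ 0 →
      Dec (N_v (f (v, 0)), (1 : Fin 2)) = f (-v, 1) ∧ f (-v, 1) ≠ f (v, 1) := by
  intro v hv hv0
  have hcode : N_v (f (v, 0)) = -v := by simp [hNv]
  have hmem : -v * (2 * ((1 : Fin 2) : ℝ) - 1) ∈ Set.Icc (-π) π := by
    norm_num
    exact ⟨by linarith [hv.2], by linarith [hv.1]⟩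
  refine ⟨?_, hf.ne ?_⟩
  · rw [hcode, decode_eq_of_autoencoder Fin.two_mul_cast_sub_one_mul_self hNv hNc hae hmem]
    norm_num
  · simpa using neg_ne_self.mpr hv0
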